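/- Let E be an n-dimensional nilpotent evolution algebra with strictly upper triangular structure matrix relative to a natural basis {e_1,...,e_n}. If E is spanned by the principal powers u, u^2, ..., u^n of some element u, then all first-superdiagonal structure constants a_{i,i+1} are nonzero (i.e., E has maximum index of nilpotency). -/

import Mathlib

/-!
Since the structure matrix is strictly upper triangular, the coordinates of `u^(m+1)` at the
basis vectors `e_1, …, e_m` vanish, and its coordinate at `e_(m+1)` is that of `u^m` at `e_m`
times `u_m · a_(m,m+1)`. So the principal powers form a triangular family; as they span `E`,
its diagonal coefficients are nonzero, which forces every `a_(m,m+1)` to be nonzero.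
-/

open Submodule

variable {K : Type} [Field K] {E : Type} [AddCommGroup E] [Module K E]

/-- The product of two submodules under a bilinear multiplication. -/
def mulSet (μ : E →ₗ[K] E →ₗ[K] E) (U V : Submodule K E) : Submodule K E :=
  Submodule.span K {z | ∃ u ∈ U, ∃ v ∈ V, z = μ u v}

/-- Derived series starting from a submodule: `dser μ I 0 = I`,
`dser μ I (k+1) = (dser μ I k)·(dser μ I k)`.  Thus `dser μ ⊤ (k-1) = E^(k)`. -/
def dser (μ : E →ₗ[K] E →ₗ[K] E) (I : Submodule K E) : ℕ → Submodule K E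
  | 0 => I
  | k + 1 => mulSet μ (dser μ I k) (dser μ I k)

/-- Lower central-type series: `lowerPow μ k = E^(k+1)` where
`E^1 = E` and `E^(k+1) = Σ_{i=1}^k E^i E^(k+1-i)`. -/
def lowerPow (μ : E →ₗ[K] E →ₗ[K] E) : ℕ → Submodule K E
  | 0 => ⊤
  | k + 1 => ⨆ i : Fin (k + 1), mulSet μ (lowerPow μ i.1) (lowerPow μ (k - i.1))
  decreasing_by
  · exact i.2
  · omega

/-- A submodule closed under the multiplication. -/
def IsSubalg (μ : E →ₗ[K] E →ₗ[K] E) (U : Submodule K E) : Prop :=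
  ∀ x ∈ U, ∀ y ∈ U, μ x y ∈ U

/-- A (two-sided) ideal. -/
def IsIdeal (μ : E →ₗ[K] E →ₗ[K] E) (I : Submodule K E) : Prop :=
  ∀ x ∈ I, ∀ y : E, μ x y ∈ I ∧ μ y x ∈ I

/-- Subalgebra generated by a set. -/
def gen (μ : E →ₗ[K] E →ₗ[K] E) (s : Set E) : Submodule K E :=
  sInf {W | IsSubalg μ W ∧ s ⊆ W}

/-- Quasi-ideal: the subalgebra generated together with any subalgebra is the vector-space sum. -/
def QuasiIdeal (μ : E →ₗ[K] E →ₗ[K] E) (U : Submodule K E) : Prop :=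
  IsSubalg μ U ∧ ∀ V : Submodule K E, IsSubalg μ V → gen μ (↑U ∪ ↑V) = U ⊔ V

/-- The subalgebra lattice is modular. -/
def ModularLat (μ : E →ₗ[K] E →ₗ[K] E) : Prop :=
  ∀ U V W : Submodule K E, IsSubalg μ U → IsSubalg μ V → IsSubalg μ W → U ≤ W →
    gen μ (↑U ∪ ↑(V ⊓ W)) = gen μ (↑U ∪ ↑V) ⊓ W

/-- The subalgebra lattice is distributive. -/
def DistribLat (μ : E →ₗ[K] E →ₗ[K] E) : Prop :=
  ∀ U V W : Submodule K E, IsSubalg μ U → IsSubalg μ V → IsSubalg μ W →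
    gen μ (↑U ∪ ↑(V ⊓ W)) = gen μ (↑U ∪ ↑V) ⊓ gen μ (↑U ∪ ↑W)

/-- Supersolvable: a complete flag of ideals. -/
def Supersolvable (μ : E →ₗ[K] E →ₗ[K] E) : Prop :=
  ∃ I : ℕ → Submodule K E, (∀ i, IsIdeal μ (I i)) ∧ (∀ i, I i ≤ I (i + 1)) ∧
    (∀ i ≤ Module.finrank K E, Module.finrank K (I i) = i) ∧ I (Module.finrank K E) = ⊤

/-- Maximal subalgebra `A` of the subalgebra `B`. -/
def MaxIn (μ : E →ₗ[K] E →ₗ[K] E) (A B : Submodule K E) : Prop :=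
  A ≤ B ∧ A ≠ B ∧ ∀ W : Submodule K E, IsSubalg μ W → A ≤ W → W ≤ B → W = A ∨ W = B

/-- Principal powers: `ppow μ u m = u^(m+1)`, i.e. `ppow μ u 0 = u`,
`ppow μ u (m+1) = (ppow μ u m)·u`. -/
def ppow (μ : E →ₗ[K] E →ₗ[K] E) (u : E) : ℕ → E
  | 0 => u
  | m + 1 => μ (ppow μ u m) u

section TriangularSpanning

variable {ι : Type*} [Fintype ι] [LinearOrder ι]

theorem Module.Basis.repr_self_ne_zero_of_span_eq_top (b : Module.Basis ι K E) {v : ι → E}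
    (hspan : span K (Set.range v) = ⊤) (htri : ∀ i j, i < j → b.repr (v j) i = 0) (i : ι) :
    b.repr (v i) i ≠ 0 := by
  classical
  have hli : LinearIndependent K v := by
    have := Module.Finite.of_basis b
    exact linearIndependent_of_top_le_span_of_card_eq_finrank hspan.ge
      (Module.finrank_eq_card_basis b).symm
  have hdet : (b.toMatrix v).det ≠ 0 := by
    rw [← b.det_apply]
    exact (b.is_basis_iff_det.mp ⟨hli, hspan⟩).ne_zero
  have hlower : (b.toMatrix v).IsLowerTriangular := fun i j hij => htri i j hij
  rw [Matrix.det_of_isLowerTriangular _ hlower] at hdet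
  exact Finset.prod_ne_zero_iff.mp hdet i (Finset.mem_univ i)

end TriangularSpanning

section EvolutionAlgebra

variable {n : ℕ} (μ : E →ₗ[K] E →ₗ[K] E) (b : Module.Basis (Fin n) K E)
  (hnat : ∀ i j : Fin n, i ≠ j → μ (b i) (b j) = 0)
  (hupper : ∀ i k : Fin n, k ≤ i → b.repr (μ (b i) (b i)) k = 0)
include hnat

theorem repr_mul_of_natural_basis (x y : E) (k : Fin n) :
    b.repr (μ x y) k = ∑ i, b.repr x i * b.repr y i * b.repr (μ (b i) (b i)) k := by
  have hxy : μ x y = ∑ i, (b.repr x i * b.repr y i) • μ (b i) (b i) := by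
    conv_lhs => rw [← b.sum_repr x, ← b.sum_repr y]
    simp only [map_sum, map_smul, LinearMap.coe_sum, Finset.sum_apply, LinearMap.smul_apply]
    refine Finset.sum_congr rfl fun j _ => ?_
    rw [Finset.sum_eq_single j (fun i _ hi => by rw [hnat i j hi, smul_zero]) (by simp),
      smul_smul, mul_comm (b.repr y j)]
  simp only [hxy, map_sum, map_smul, Finset.sum_apply', Finsupp.smul_apply, smul_eq_mul, mul_assoc]

include hupper

theorem repr_ppow_eq_zero_of_lt (u : E) (m : ℕ) (j : Fin n) (hj : j.1 < m) :
    b.repr (ppow μ u m) j = 0 := by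
  induction m generalizing j with
  | zero => omega
  | succ m ih =>
    rw [ppow, repr_mul_of_natural_basis μ b hnat]
    refine Finset.sum_eq_zero fun i _ => ?_
    rcases lt_or_ge i.1 m with hi | hi
    · rw [ih i hi, zero_mul, zero_mul]
    · rw [hupper i j (by omega), mul_zero]

theorem repr_ppow_succ_self (u : E) (m : ℕ) (hm : m + 1 < n) :
    b.repr (ppow μ u (m + 1)) ⟨m + 1, hm⟩ =
      b.repr (ppow μ u m) ⟨m, m.lt_of_succ_lt hm⟩ * b.repr u ⟨m, m.lt_of_succ_lt hm⟩ *
        b.repr (μ (b ⟨m, m.lt_of_succ_lt hm⟩) (b ⟨m, m.lt_of_succ_lt hm⟩)) ⟨m + 1, hm⟩ := by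
  rw [ppow, repr_mul_of_natural_basis μ b hnat]
  refine Finset.sum_eq_single _ (fun i _ hi => ?_) (by simp)
  rcases lt_or_gt_of_ne (Fin.val_ne_of_ne hi) with hlt | hgt
  · rw [repr_ppow_eq_zero_of_lt μ b hnat hupper u m i hlt, zero_mul, zero_mul]
  · rw [hupper i _ (Fin.mk_le_of_le_val hgt), mul_zero]

end EvolutionAlgebra

/-- if a nilpotent evolution algebra with strictly upper triangular
structure matrix is spanned by the principal powers `u, u², …, uⁿ` of some element,
then all first-superdiagonal structure constants are nonzero. -/
theorem stmt9 {n : ℕ} (μ : E →ₗ[K] E →ₗ[K] E)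
    (b : Module.Basis (Fin n) K E)
    (hnat : ∀ i j : Fin n, i ≠ j → μ (b i) (b j) = 0)
    (hupper : ∀ i k : Fin n, k ≤ i → b.repr (μ (b i) (b i)) k = 0)
    (u : E)
    (hspan : Submodule.span K (Set.range fun m : Fin n => ppow μ u m.1) = ⊤) :
    ∀ i : ℕ, ∀ h : i + 1 < n,
      b.repr (μ (b ⟨i, by omega⟩) (b ⟨i, by omega⟩)) ⟨i + 1, h⟩ ≠ 0 := by
  intro i h
  have hdiag := b.repr_self_ne_zero_of_span_eq_top hspan
    (fun k j hkj => repr_ppow_eq_zero_of_lt μ b hnat hupper u j.1 k hkj) ⟨i + 1, h⟩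
  rw [repr_ppow_succ_self μ b hnat hupper u i h] at hdiag
  exact right_ne_zero_of_mul hdiag
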